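/- Let F be a field, G = GL_n(F) with n = α_1 + ... + α_p, P the standard parabolic subgroup of block upper triangular matrices with diagonal blocks GL_{α_1},...,GL_{α_p}, L its block diagonal Levi subgroup, N its block unipotent radical, and B the Borel subgroup of upper triangular matrices. Let H ≤ L be a subgroup with finitely many (H, L∩B)-double cosets in L, say L = ⊔_{k=1}^{N_H} H g_k (L∩B), and let K = HN. Then for every w ∈ G the double coset space K \ G / B is finite; in fact |K\G/B| = N_H · n!/(α_1!···α_p!). -/

import Mathlib

open scoped Matrix

variable (F : Type*) [Field F]

/-- The Levi subgroup `L` of block diagonal matrices, where the block of the index `i` is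
`b i`. -/
def leviSet (n p : ℕ) (b : Fin n → Fin p) : Set (Matrix (Fin n) (Fin n) F)ˣ :=
  {x | ∀ i j : Fin n, (x : Matrix (Fin n) (Fin n) F) i j ≠ 0 → b i = b j}

/-- The Borel `B` of invertible upper triangular matrices. -/
def borelSet (n : ℕ) : Set (Matrix (Fin n) (Fin n) F)ˣ :=
  {x | ∀ i j : Fin n, (x : Matrix (Fin n) (Fin n) F) i j ≠ 0 → (i : ℕ) ≤ (j : ℕ)}

/-- The unipotent radical `N` of the standard parabolic `P`: block upper triangular
with identity diagonal blocks. -/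
def unipSet (n p : ℕ) (b : Fin n → Fin p) : Set (Matrix (Fin n) (Fin n) F)ˣ :=
  {x | (∀ i j : Fin n, (x : Matrix (Fin n) (Fin n) F) i j ≠ 0 → b i ≤ b j) ∧
    ∀ i j : Fin n, b i = b j →
      (x : Matrix (Fin n) (Fin n) F) i j = if i = j then 1 else 0}

/-- `K = H N`. -/
def KSet (n p : ℕ) (b : Fin n → Fin p) (H : Subgroup (Matrix (Fin n) (Fin n) F)ˣ) :
    Set (Matrix (Fin n) (Fin n) F)ˣ :=
  {x | ∃ h ∈ H, ∃ u ∈ unipSet F n p b, x = h * u}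


open Matrix Equiv

variable {F}



/-- upper triangular condition -/
def UT {n : ℕ} (A : Matrix (Fin n) (Fin n) F) : Prop :=
  ∀ i j : Fin n, A i j ≠ 0 → i ≤ j

lemma UT.blockTriangular {n : ℕ} {A : Matrix (Fin n) (Fin n) F} (h : UT A) :
    BlockTriangular A id := by
  intro i j hij
  by_contra h0
  exact absurd (h _ _ h0) (not_le.mpr hij)

lemma blockTriangular_iff_UT {n : ℕ} {A : Matrix (Fin n) (Fin n) F} :
    BlockTriangular A id ↔ UT A := by
  constructor
  · intro h i j hij
    by_contra hc
    exact hij (h (show id j < id i from not_le.mp hc))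
  · exact UT.blockTriangular

lemma UT.det_eq {n : ℕ} {A : Matrix (Fin n) (Fin n) F} (h : UT A) :
    A.det = ∏ i, A i i := det_of_upperTriangular h.blockTriangular

lemma UT.mul {n : ℕ} {A B : Matrix (Fin n) (Fin n) F} (hA : UT A) (hB : UT B) :
    UT (A * B) := by
  intro i j hij
  rw [Matrix.mul_apply] at hij
  obtain ⟨k, -, hk⟩ := Finset.exists_ne_zero_of_sum_ne_zero hij
  rcases mul_ne_zero_iff.mp hk with ⟨h1, h2⟩
  exact le_trans (hA _ _ h1) (hB _ _ h2)

lemma UT.inv {n : ℕ} {A : Matrix (Fin n) (Fin n) F} (hA : UT A) (hd : IsUnit A.det) :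
    UT A⁻¹ := by
  haveI := A.invertibleOfIsUnitDet hd
  exact blockTriangular_iff_UT.mp (blockTriangular_inv_of_blockTriangular hA.blockTriangular)

lemma UT.diag_ne_zero {n : ℕ} {A : Matrix (Fin n) (Fin n) F} (hA : UT A) (hd : IsUnit A.det)
    (i : Fin n) : A i i ≠ 0 := by
  rw [hA.det_eq, isUnit_iff_ne_zero] at hd
  exact fun h => hd (Finset.prod_eq_zero (Finset.mem_univ i) h)

lemma isUnit_det_inv {n : ℕ} {A : Matrix (Fin n) (Fin n) F} (hd : IsUnit A.det) :
    IsUnit A⁻¹.det := by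
  refine IsUnit.of_mul_eq_one A.det ?_
  rw [← Matrix.det_mul, Matrix.nonsing_inv_mul A hd, Matrix.det_one]

/-- permutation matrix entry -/
lemma permMatrix_apply {n : ℕ} (σ : Equiv.Perm (Fin n)) (i j : Fin n) :
    (σ.permMatrix F) i j = if σ i = j then 1 else 0 := by
  simp [Equiv.Perm.permMatrix, PEquiv.toMatrix_apply, Equiv.toPEquiv_apply, eq_comm]

lemma permMatrix_mul {n : ℕ} (σ : Equiv.Perm (Fin n)) (M : Matrix (Fin n) (Fin n) F) (i j : Fin n) :
    (σ.permMatrix F * M) i j = M (σ i) j := by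
  rw [Equiv.Perm.permMatrix, PEquiv.toMatrix_toPEquiv_mul]; rfl

lemma mul_permMatrix {n : ℕ} (σ : Equiv.Perm (Fin n)) (M : Matrix (Fin n) (Fin n) F) (i j : Fin n) :
    (M * σ.permMatrix F) i j = M i (σ.symm j) := by
  rw [Equiv.Perm.permMatrix, PEquiv.mul_toMatrix_toPEquiv]; rfl

lemma permMatrix_mul_permMatrix {n : ℕ} (σ τ : Equiv.Perm (Fin n)) :
    (σ.permMatrix F) * (τ.permMatrix F) = (τ * σ).permMatrix F := by
  rw [Equiv.Perm.permMatrix, Equiv.Perm.permMatrix, ← PEquiv.toMatrix_trans,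
    ← Equiv.toPEquiv_trans]
  rfl

lemma permMatrix_one {n : ℕ} : ((1 : Equiv.Perm (Fin n)).permMatrix F) = 1 := by
  rw [Equiv.Perm.permMatrix]
  show (Equiv.toPEquiv (Equiv.refl _)).toMatrix = 1
  rw [Equiv.toPEquiv_refl, PEquiv.toMatrix_refl]

/-- a permutation of Fin n which is ≥ id is the identity -/
lemma perm_eq_one_of_le {n : ℕ} (π : Equiv.Perm (Fin n)) (h : ∀ i, i ≤ π i) : π = 1 := by
  by_contra hne
  have hs : (Finset.univ.filter fun i => π i ≠ i).Nonempty := by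
    by_contra hempty
    apply hne
    apply Equiv.ext
    intro i
    have := Finset.not_nonempty_iff_eq_empty.mp hempty
    have hi : i ∉ Finset.univ.filter fun i => π i ≠ i := by rw [this]; exact Finset.notMem_empty _
    simp only [Finset.mem_filter, Finset.mem_univ, true_and, not_not] at hi
    simpa using hi
  set s := Finset.univ.filter fun i => π i ≠ i with hs_def
  set i := s.max' hs with hi_def
  have hmem : i ∈ s := s.max'_mem hs
  have hπi : π i ≠ i := by simpa [hs_def] using hmem
  have hlt : i < π i := lt_of_le_of_ne (h i) (Ne.symm hπi)
  have hπi_not : π i ∉ s := fun hin => absurd (s.le_max' _ hin) (not_le.mpr hlt)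
  have : π (π i) = π i := by
    by_contra hc
    exact hπi_not (by simp [hs_def, hc])
  exact hπi (π.injective this)

/-- Bruhat uniqueness at the matrix level -/
lemma bruhat_unique {n : ℕ} (σ τ : Equiv.Perm (Fin n)) (T₁ T₂ : Matrix (Fin n) (Fin n) F)
    (h1 : UT T₁) (h2 : UT T₂) (d1 : IsUnit T₁.det) (d2 : IsUnit T₂.det)
    (heq : T₁ * σ.permMatrix F * T₂ = τ.permMatrix F) : σ = τ := by
  haveI := T₁.invertibleOfIsUnitDet d1
  have key : ∀ i k : Fin n, T₁⁻¹ i k = T₂ (σ i) (τ k) := by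
    intro i k
    have h3 : σ.permMatrix F * T₂ = T₁⁻¹ * τ.permMatrix F := by
      rw [← heq, Matrix.mul_assoc, ← Matrix.mul_assoc T₁⁻¹ T₁ _, Matrix.nonsing_inv_mul T₁ d1,
        Matrix.one_mul]
    have := congrFun (congrFun h3 i) (τ k)
    rw [_root_.permMatrix_mul, mul_permMatrix] at this
    simpa using this.symm
  -- diag of T₂ nonzero gives i ≤ τ⁻¹ (σ i)
  have hπ : ∀ i : Fin n, i ≤ τ⁻¹ (σ i) := by
    intro i
    have hnz : T₂ (σ i) (σ i) ≠ 0 := h2.diag_ne_zero d2 (σ i)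
    have : T₁⁻¹ i (τ⁻¹ (σ i)) ≠ 0 := by
      rw [key i (τ⁻¹ (σ i))]
      simpa using hnz
    exact (h1.inv d1) _ _ this
  have : τ⁻¹ * σ = 1 := perm_eq_one_of_le _ (by intro i; simpa using hπ i)
  have := congrArg (fun x => τ * x) this
  simpa [mul_assoc] using this


def emb (k : Fin (n + 1)) : Matrix (Fin (n + 1)) (Fin n) F :=
  Matrix.of fun i i' => if i = k.succAbove i' then 1 else 0

def sbm (k l : Fin (n + 1)) : Matrix (Fin (n + 1)) (Fin (n + 1)) F :=
  Matrix.of fun a c => if a = k ∧ c = l then 1 else 0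

def ins (k l : Fin (n + 1)) (X : Matrix (Fin n) (Fin n) F) : Matrix (Fin (n + 1)) (Fin (n + 1)) F :=
  emb (F := F) k * X * (emb (F := F) l)ᵀ + sbm k l

@[simp] lemma emb_apply (k : Fin (n + 1)) (i : Fin (n + 1)) (i' : Fin n) :
    (emb k : Matrix _ _ F) i i' = if i = k.succAbove i' then 1 else 0 := rfl

@[simp] lemma sbm_apply (k l : Fin (n + 1)) (a c : Fin (n + 1)) :
    (sbm k l : Matrix _ _ F) a c = if a = k ∧ c = l then 1 else 0 := rfl

lemma emb_mul_apply (k : Fin (n + 1)) (X : Matrix (Fin n) (Fin n) F) (i' j' : Fin n) :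
    (emb (F := F) k * X :) (k.succAbove i') j' = X i' j' := by
  rw [Matrix.mul_apply, Finset.sum_eq_single_of_mem i' (Finset.mem_univ _)]
  · simp
  · intro c _ hc
    simp [Fin.succAbove_right_inj, hc.symm]

lemma emb_mul_apply_self (k : Fin (n + 1)) (X : Matrix (Fin n) (Fin n) F) (j' : Fin n) :
    (emb (F := F) k * X :) k j' = 0 := by
  rw [Matrix.mul_apply]
  apply Finset.sum_eq_zero
  intro c _
  simp [(Fin.succAbove_ne k c).symm]

lemma mul_embT_apply (l : Fin (n + 1)) (Y : Matrix (Fin (n + 1)) (Fin n) F) (i : Fin (n + 1))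
    (j' : Fin n) : (Y * (emb (F := F) l)ᵀ :) i (l.succAbove j') = Y i j' := by
  rw [Matrix.mul_apply, Finset.sum_eq_single_of_mem j' (Finset.mem_univ _)]
  · simp
  · intro c _ hc
    simp [Fin.succAbove_right_inj, hc.symm]

lemma mul_embT_apply_self (l : Fin (n + 1)) (Y : Matrix (Fin (n + 1)) (Fin n) F)
    (i : Fin (n + 1)) : (Y * (emb (F := F) l)ᵀ :) i l = 0 := by
  rw [Matrix.mul_apply]
  apply Finset.sum_eq_zero
  intro c _
  simp [(Fin.succAbove_ne l c).symm]

lemma ins_apply_embed (k l : Fin (n + 1)) (X : Matrix (Fin n) (Fin n) F) (i' j' : Fin n) :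
    ins k l X (k.succAbove i') (l.succAbove j') = X i' j' := by
  rw [ins, Matrix.add_apply, mul_embT_apply, emb_mul_apply]
  simp [Fin.succAbove_ne k i']

lemma ins_apply_row (k l : Fin (n + 1)) (X : Matrix (Fin n) (Fin n) F) (j : Fin (n + 1)) :
    ins k l X k j = if j = l then 1 else 0 := by
  rw [ins, Matrix.add_apply]
  have h1 : (emb (F := F) k * X * (emb (F := F) l)ᵀ :) k j = 0 := by
    rw [Matrix.mul_apply]
    apply Finset.sum_eq_zero
    intro c _
    rw [emb_mul_apply_self, zero_mul]
  rw [h1, zero_add]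
  simp

lemma ins_apply_col (k l : Fin (n + 1)) (X : Matrix (Fin n) (Fin n) F) (i : Fin (n + 1)) :
    ins k l X i l = if i = k then 1 else 0 := by
  rw [ins, Matrix.add_apply, mul_embT_apply_self, zero_add]
  simp

lemma embT_mul_emb (l : Fin (n + 1)) :
    ((emb (F := F) l)ᵀ * emb (F := F) l : Matrix (Fin n) (Fin n) F) = 1 := by
  ext i' j'
  rw [Matrix.mul_apply]
  rcases eq_or_ne i' j' with rfl | hne
  · rw [Finset.sum_eq_single_of_mem (l.succAbove i') (Finset.mem_univ _)]
    · simp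
    · intro c _ hc
      simp [hc]
  · rw [Matrix.one_apply_ne hne]
    apply Finset.sum_eq_zero
    intro c _
    rcases eq_or_ne c (l.succAbove i') with rfl | hc
    · simp [Fin.succAbove_right_inj, hne]
    · simp [hc]

lemma embT_mul_sbm (l m : Fin (n + 1)) :
    ((emb (F := F) l)ᵀ * sbm (F := F) l m : Matrix (Fin n) (Fin (n + 1)) F) = 0 := by
  ext i' j
  rw [Matrix.mul_apply]
  apply Finset.sum_eq_zero
  intro c _
  rcases eq_or_ne c l with rfl | hc
  · simp [(Fin.succAbove_ne c i').symm]
  · simp [hc]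

lemma sbm_mul_emb (k l : Fin (n + 1)) :
    (sbm (F := F) k l * emb (F := F) l : Matrix (Fin (n + 1)) (Fin n) F) = 0 := by
  ext i j'
  rw [Matrix.mul_apply]
  apply Finset.sum_eq_zero
  intro c _
  rcases eq_or_ne c l with rfl | hc
  · rw [emb_apply, if_neg (Ne.symm (Fin.succAbove_ne c j')), mul_zero]
  · simp [hc]

lemma sbm_mul_sbm (k l m : Fin (n + 1)) :
    (sbm k l * sbm l m : Matrix (Fin (n + 1)) (Fin (n + 1)) F) = sbm k m := by
  ext i j
  rw [Matrix.mul_apply, Finset.sum_eq_single_of_mem l (Finset.mem_univ _)]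
  · by_cases hi : i = k <;> by_cases hj : j = m <;> simp [hi, hj]
  · intro c _ hc
    simp [hc]

lemma ins_mul_ins (k l m : Fin (n + 1)) (X Y : Matrix (Fin n) (Fin n) F) :
    ins k l X * ins l m Y = ins k m (X * Y) := by
  simp only [ins, Matrix.add_mul, Matrix.mul_add, Matrix.mul_assoc]
  rw [← Matrix.mul_assoc ((emb l)ᵀ) (emb l) (Y * (emb m)ᵀ), embT_mul_emb, Matrix.one_mul,
    embT_mul_sbm, Matrix.mul_zero, Matrix.mul_zero, ← Matrix.mul_assoc (sbm k l) (emb l) _,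
    sbm_mul_emb, Matrix.zero_mul, sbm_mul_sbm, add_zero, zero_add]

lemma ins_UT {X : Matrix (Fin n) (Fin n) F} (k : Fin (n + 1))
    (hX : ∀ i j : Fin n, X i j ≠ 0 → i ≤ j) :
    ∀ i j : Fin (n + 1), ins k k X i j ≠ 0 → i ≤ j := by
  intro i j hij
  rcases eq_or_ne i k with rfl | hi
  · rw [ins_apply_row] at hij
    have : j = i := by by_contra hc; exact hij (if_neg hc)
    exact this.ge
  · rcases eq_or_ne j k with rfl | hj
    · rw [ins_apply_col, if_neg hi] at hij
      exact absurd rfl hij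
    · obtain ⟨i', rfl⟩ := Fin.exists_succAbove_eq (Ne.symm hi).symm
      obtain ⟨j', rfl⟩ := Fin.exists_succAbove_eq (Ne.symm hj).symm
      rw [ins_apply_embed] at hij
      exact Fin.succAbove_le_succAbove_iff.mpr (hX _ _ hij)

lemma ins_submatrix (k l : Fin (n + 1)) (X : Matrix (Fin n) (Fin n) F) :
    (ins k l X).submatrix k.succAbove l.succAbove = X := by
  ext i' j'
  rw [Matrix.submatrix_apply, ins_apply_embed]

lemma ins_det (k : Fin (n + 1)) (X : Matrix (Fin n) (Fin n) F) :
    (ins k k X).det = X.det := by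
  rw [Matrix.det_succ_row _ k, Finset.sum_eq_single_of_mem k (Finset.mem_univ _)]
  · rw [ins_apply_row, if_pos rfl, ins_submatrix, mul_one]
    have : Even ((k : ℕ) + (k : ℕ)) := ⟨k, rfl⟩
    rw [this.neg_one_pow, one_mul]
  · intro c _ hc
    rw [ins_apply_row, if_neg hc, mul_zero, zero_mul]
/-- the permutation obtained from `σ'` by inserting `k ↦ l`. -/
def insPerm (k l : Fin (n + 1)) (σ' : Equiv.Perm (Fin n)) : Equiv.Perm (Fin (n + 1)) :=
  (finSuccEquiv' k).trans ((Equiv.optionCongr σ').trans (finSuccEquiv' l).symm)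

lemma insPerm_at (k l : Fin (n + 1)) (σ' : Equiv.Perm (Fin n)) : insPerm k l σ' k = l := by
  simp [insPerm]

lemma insPerm_succAbove (k l : Fin (n + 1)) (σ' : Equiv.Perm (Fin n)) (i' : Fin n) :
    insPerm k l σ' (k.succAbove i') = l.succAbove (σ' i') := by
  simp [insPerm]

lemma ins_permMatrix (k l : Fin (n + 1)) (σ' : Equiv.Perm (Fin n)) :
    ins k l (σ'.permMatrix F) = (insPerm k l σ').permMatrix F := by
  ext i j
  rcases eq_or_ne i k with rfl | hi
  · rw [ins_apply_row, permMatrix_apply, insPerm_at]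
    rcases eq_or_ne j l with rfl | hj
    · simp
    · rw [if_neg hj, if_neg (Ne.symm hj)]
  · obtain ⟨i', rfl⟩ := Fin.exists_succAbove_eq (Ne.symm hi).symm
    rcases eq_or_ne j l with rfl | hj
    · rw [ins_apply_col, if_neg hi, permMatrix_apply, insPerm_succAbove,
        if_neg (Fin.succAbove_ne j (σ' i'))]
    · obtain ⟨j', rfl⟩ := Fin.exists_succAbove_eq (Ne.symm hj).symm
      rw [ins_apply_embed, permMatrix_apply, permMatrix_apply, insPerm_succAbove]
      by_cases h : σ' i' = j'
      · rw [if_pos h, if_pos (by rw [h])]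
      · rw [if_neg h, if_neg (fun hc => h (Fin.succAbove_right_injective hc))]

theorem bruhat_exists (n : ℕ) (A : Matrix (Fin n) (Fin n) F) (hA : IsUnit A.det) :
    ∃ (σ : Equiv.Perm (Fin n)) (T₁ T₂ : Matrix (Fin n) (Fin n) F),
      UT T₁ ∧ UT T₂ ∧ IsUnit T₁.det ∧ IsUnit T₂.det ∧ A = T₁ * σ.permMatrix F * T₂ := by
  classical
  induction n with
  | zero =>
      refine ⟨1, 1, 1, ?_, ?_, ?_, ?_, ?_⟩
      · intro i; exact i.elim0
      · intro i; exact i.elim0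
      · rw [Matrix.det_one]; exact isUnit_one
      · rw [Matrix.det_one]; exact isUnit_one
      · ext i; exact i.elim0
  | succ n ih =>
      set lst := Fin.last n with hlst
      -- the bottom row is nonzero
      have hrow : ∃ j, A lst j ≠ 0 := by
        by_contra hc
        push_neg at hc
        exact hA.ne_zero (Matrix.det_eq_zero_of_row_eq_zero lst hc)
      have hsne : (Finset.univ.filter fun j => A lst j ≠ 0).Nonempty := by
        obtain ⟨j, hj⟩ := hrow
        exact ⟨j, by simp [hj]⟩
      set j₀ := (Finset.univ.filter fun j => A lst j ≠ 0).min' hsne with hj₀def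
      have hj₀ : A lst j₀ ≠ 0 := by
        have := Finset.min'_mem _ hsne
        simpa [hj₀def] using this
      have hmin : ∀ j, j < j₀ → A lst j = 0 := by
        intro j hj
        by_contra hc
        exact absurd (Finset.min'_le _ j (by simp [hc])) (not_le.mpr hj)
      -- column clearing matrix
      set T₂ : Matrix (Fin (n + 1)) (Fin (n + 1)) F := Matrix.of fun k j =>
        if k = j then (if k = j₀ then (A lst j₀)⁻¹ else 1)
        else if k = j₀ then -(A lst j * (A lst j₀)⁻¹) else 0 with hT₂def
      have hT₂apply : ∀ k j, T₂ k j =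
          if k = j then (if k = j₀ then (A lst j₀)⁻¹ else 1)
          else if k = j₀ then -(A lst j * (A lst j₀)⁻¹) else 0 := fun k j => rfl
      have hT₂ : UT T₂ := by
        intro k j hkj
        rw [hT₂apply] at hkj
        rcases eq_or_ne k j with rfl | hne
        · exact le_refl _
        · rw [if_neg hne] at hkj
          by_cases hk : k = j₀
          · by_contra hc
            have hjlt : j < j₀ := by rw [← hk]; exact not_le.mp hc
            rw [if_pos hk, hmin j hjlt, zero_mul, neg_zero] at hkj
            exact hkj rfl
          · rw [if_neg hk] at hkj; exact absurd rfl hkj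
      have hT₂diag : ∀ k, T₂ k k ≠ 0 := by
        intro k
        rw [hT₂apply, if_pos rfl]
        by_cases hk : k = j₀
        · rw [if_pos hk]; exact inv_ne_zero hj₀
        · rw [if_neg hk]; exact one_ne_zero
      have hT₂det : IsUnit T₂.det := by
        rw [hT₂.det_eq, isUnit_iff_ne_zero, Finset.prod_ne_zero_iff]
        exact fun k _ => hT₂diag k
      -- bottom row of A * T₂
      have hclear : ∀ j, (A * T₂) lst j = if j = j₀ then 1 else 0 := by
        intro j
        rw [Matrix.mul_apply]
        rcases eq_or_ne j j₀ with rfl | hne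
        · rw [Finset.sum_eq_single_of_mem j₀ (Finset.mem_univ _), if_pos rfl]
          · rw [hT₂apply, if_pos rfl, if_pos rfl, mul_inv_cancel₀ hj₀]
          · intro c _ hc
            rw [hT₂apply, if_neg hc, if_neg hc, mul_zero]
        · rw [if_neg hne, Finset.sum_eq_add_of_mem j j₀ (Finset.mem_univ _) (Finset.mem_univ _)
            hne]
          · rw [hT₂apply, hT₂apply, if_pos rfl, if_neg hne, if_neg (Ne.symm hne), if_pos rfl]
            field_simp
            ring
          · intro c _ hc
            rw [hT₂apply, if_neg (fun h : c = j => hc.1 h), if_neg hc.2, mul_zero]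
      -- row clearing matrix
      set A' := A * T₂ with hA'def
      set T₁ : Matrix (Fin (n + 1)) (Fin (n + 1)) F := Matrix.of fun i k =>
        if i = k then 1 else if k = lst then -(A' i j₀) else 0 with hT₁def
      have hT₁apply : ∀ i k, T₁ i k =
          if i = k then 1 else if k = lst then -(A' i j₀) else 0 := fun i k => rfl
      have hT₁ : UT T₁ := by
        intro i k hik
        rw [hT₁apply] at hik
        rcases eq_or_ne i k with rfl | hne
        · exact le_refl _
        · rcases eq_or_ne k lst with rfl | hne2
          · exact Fin.le_last i
          · rw [if_neg hne, if_neg hne2] at hik; exact absurd rfl hik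
      have hT₁det : IsUnit T₁.det := by
        rw [hT₁.det_eq, isUnit_iff_ne_zero, Finset.prod_ne_zero_iff]
        intro k _
        rw [hT₁apply, if_pos rfl]
        exact one_ne_zero
      set B := T₁ * A' with hBdef
      have hBrow : ∀ j, B lst j = if j = j₀ then 1 else 0 := by
        intro j
        rw [hBdef, Matrix.mul_apply, Finset.sum_eq_single_of_mem lst (Finset.mem_univ _)]
        · rw [hT₁apply, if_pos rfl, one_mul, ← hclear j]
        · intro c _ hc
          rw [hT₁apply, if_neg (Ne.symm hc), if_neg hc, zero_mul]
      have hBcol : ∀ i, i ≠ lst → B i j₀ = 0 := by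
        intro i hi
        rw [hBdef, Matrix.mul_apply, Finset.sum_eq_add_of_mem i lst (Finset.mem_univ _)
          (Finset.mem_univ _) hi]
        · rw [hT₁apply, hT₁apply, if_pos rfl, if_neg hi, if_pos rfl, one_mul, hclear,
            if_pos rfl, mul_one, add_neg_cancel]
        · intro c _ hc
          rw [hT₁apply, if_neg (Ne.symm hc.1), if_neg hc.2, zero_mul]
      have hBdet : IsUnit B.det := by
        rw [hBdef, Matrix.det_mul, hA'def, Matrix.det_mul]
        exact hT₁det.mul (hA.mul hT₂det)
      -- the minor
      set B' := B.submatrix lst.succAbove j₀.succAbove with hB'def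
      have hBdet_expand : B.det = (-1) ^ ((lst : ℕ) + (j₀ : ℕ)) * B'.det := by
        rw [Matrix.det_succ_row B lst, Finset.sum_eq_single_of_mem j₀ (Finset.mem_univ _)]
        · rw [hBrow, if_pos rfl, mul_one]
        · intro c _ hc
          rw [hBrow, if_neg hc, mul_zero, zero_mul]
      have hB'det : IsUnit B'.det := by
        rw [hBdet_expand] at hBdet
        exact (IsUnit.mul_iff.mp hBdet).2
      obtain ⟨σ', S₁, S₂, hS₁, hS₂, hS₁det, hS₂det, hB'⟩ := ih B' hB'det
      -- reconstruct B
      have hBins : B = ins lst j₀ B' := by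
        ext i j
        rcases eq_or_ne i lst with rfl | hi
        · rw [ins_apply_row, hBrow]
        · rcases eq_or_ne j j₀ with rfl | hj
          · rw [ins_apply_col, if_neg hi, hBcol i hi]
          · obtain ⟨i', rfl⟩ := Fin.exists_succAbove_eq (Ne.symm hi).symm
            obtain ⟨j', rfl⟩ := Fin.exists_succAbove_eq (Ne.symm hj).symm
            rw [ins_apply_embed]
            rfl
      have hBfact : B = ins lst lst S₁ * (insPerm lst j₀ σ').permMatrix F * ins j₀ j₀ S₂ := by
        rw [← ins_permMatrix, ins_mul_ins, ins_mul_ins, ← hB', ← hBins]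
      -- recover A
      have hAB : A = T₁⁻¹ * B * T₂⁻¹ := by
        rw [hBdef, hA'def, ← Matrix.mul_assoc T₁⁻¹ T₁ (A * T₂), Matrix.nonsing_inv_mul _ hT₁det,
          Matrix.one_mul, Matrix.mul_assoc A T₂ T₂⁻¹, Matrix.mul_nonsing_inv _ hT₂det,
          Matrix.mul_one]
      refine ⟨insPerm lst j₀ σ', T₁⁻¹ * ins lst lst S₁, ins j₀ j₀ S₂ * T₂⁻¹,
        UT.mul (hT₁.inv hT₁det) (ins_UT lst hS₁), UT.mul (ins_UT j₀ hS₂) (hT₂.inv hT₂det),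
        ?_, ?_, ?_⟩
      · rw [Matrix.det_mul, ins_det]
        exact (isUnit_det_inv hT₁det).mul hS₁det
      · rw [Matrix.det_mul, ins_det]
        exact hS₂det.mul (isUnit_det_inv hT₂det)
      · rw [hAB, hBfact]
        simp only [Matrix.mul_assoc]

/-! ### Structure of the parabolic, Levi, unipotent pieces -/

section Struct

variable {n p : ℕ}

/-- Levi condition for matrices -/
def leviM (b : Fin n → Fin p) (A : Matrix (Fin n) (Fin n) F) : Prop :=
  ∀ i j, A i j ≠ 0 → b i = b j

/-- parabolic condition for matrices -/
def PM (b : Fin n → Fin p) (A : Matrix (Fin n) (Fin n) F) : Prop :=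
  ∀ i j, A i j ≠ 0 → b i ≤ b j

/-- unipotent radical condition for matrices -/
def unipM (b : Fin n → Fin p) (A : Matrix (Fin n) (Fin n) F) : Prop :=
  PM b A ∧ ∀ i j, b i = b j → A i j = if i = j then 1 else 0

variable {b : Fin n → Fin p}

lemma exists_ne_zero_of_mul {A B : Matrix (Fin n) (Fin n) F} {i j : Fin n}
    (h : (A * B) i j ≠ 0) : ∃ k, A i k ≠ 0 ∧ B k j ≠ 0 := by
  rw [Matrix.mul_apply] at h
  obtain ⟨k, -, hk⟩ := Finset.exists_ne_zero_of_sum_ne_zero h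
  exact ⟨k, mul_ne_zero_iff.mp hk⟩

lemma leviM.mul {A B : Matrix (Fin n) (Fin n) F} (hA : leviM b A) (hB : leviM b B) :
    leviM b (A * B) := by
  intro i j hij
  obtain ⟨k, h1, h2⟩ := exists_ne_zero_of_mul hij
  exact (hA _ _ h1).trans (hB _ _ h2)

lemma PM.mul {A B : Matrix (Fin n) (Fin n) F} (hA : PM b A) (hB : PM b B) :
    PM b (A * B) := by
  intro i j hij
  obtain ⟨k, h1, h2⟩ := exists_ne_zero_of_mul hij
  exact (hA _ _ h1).trans (hB _ _ h2)

lemma leviM.one : leviM b (1 : Matrix (Fin n) (Fin n) F) := by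
  intro i j hij
  rcases eq_or_ne i j with rfl | hne
  · rfl
  · exact absurd (Matrix.one_apply_ne hne) hij

lemma PM.blockTriangular {A : Matrix (Fin n) (Fin n) F} (hA : PM b A) :
    BlockTriangular A b := by
  intro i j hij
  by_contra h0
  exact absurd (hA _ _ h0) (not_le.mpr hij)

lemma leviM.blockTriangular_dual {A : Matrix (Fin n) (Fin n) F} (hA : leviM b A) :
    BlockTriangular A (OrderDual.toDual ∘ b) := by
  intro i j hij
  by_contra h0
  exact absurd (hA _ _ h0).symm.le (not_le.mpr hij)

lemma PM.inv {A : Matrix (Fin n) (Fin n) F} (hA : PM b A) (hd : IsUnit A.det) :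
    PM b A⁻¹ := by
  haveI := A.invertibleOfIsUnitDet hd
  have := blockTriangular_inv_of_blockTriangular hA.blockTriangular
  intro i j hij
  by_contra h0
  exact hij (this (not_le.mp h0))

lemma leviM.inv {A : Matrix (Fin n) (Fin n) F} (hA : leviM b A) (hd : IsUnit A.det) :
    leviM b A⁻¹ := by
  haveI := A.invertibleOfIsUnitDet hd
  have h1 := blockTriangular_inv_of_blockTriangular (hA.blockTriangular_dual)
  have h2 : PM b A := fun i j hij => (hA i j hij).le
  have h3 := h2.inv hd
  intro i j hij
  refine le_antisymm (h3 _ _ hij) ?_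
  by_contra h0
  exact hij (h1 (show (OrderDual.toDual ∘ b) j < (OrderDual.toDual ∘ b) i from
    (by simpa using not_le.mp h0)))

/-- key entry computation: multiplying a Levi matrix by a unipotent one on the right
does not change the entries in the diagonal blocks -/
lemma levi_mul_unip_entry {A U : Matrix (Fin n) (Fin n) F} (hA : leviM b A) (hU : unipM b U)
    {i j : Fin n} (hij : b i = b j) : (A * U) i j = A i j := by
  rw [Matrix.mul_apply]
  have : ∀ k, A i k * U k j = A i k * (if k = j then 1 else 0) := by
    intro k
    rcases eq_or_ne (A i k) 0 with h | h
    · rw [h, zero_mul, zero_mul]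
    · rw [hU.2 k j (((hA _ _ h).symm.trans hij : b k = b j))]
  rw [Finset.sum_congr rfl fun k _ => this k]
  simp [Finset.sum_ite_eq']

lemma unip_mul_levi_entry {A U : Matrix (Fin n) (Fin n) F} (hA : leviM b A) (hU : unipM b U)
    {i j : Fin n} (hij : b i = b j) : (U * A) i j = A i j := by
  rw [Matrix.mul_apply]
  have : ∀ k, U i k * A k j = (if i = k then 1 else 0) * A k j := by
    intro k
    rcases eq_or_ne (A k j) 0 with h | h
    · rw [h, mul_zero, mul_zero]
    · rw [hU.2 i k ((hij.trans (hA _ _ h).symm : b i = b k))]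
  rw [Finset.sum_congr rfl fun k _ => this k]
  simp [Finset.sum_ite_eq]

lemma unipM.one : unipM b (1 : Matrix (Fin n) (Fin n) F) := by
  constructor
  · intro i j hij
    rcases eq_or_ne i j with rfl | hne
    · exact le_refl _
    · exact absurd (Matrix.one_apply_ne hne) hij
  · intro i j _
    rw [Matrix.one_apply]

lemma unipM.mul {U V : Matrix (Fin n) (Fin n) F} (hU : unipM b U) (hV : unipM b V) :
    unipM b (U * V) := by
  refine ⟨hU.1.mul hV.1, ?_⟩
  intro i j hij
  rw [Matrix.mul_apply]
  have : ∀ k, U i k * V k j = (if k = i then V k j else 0) := by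
    intro k
    rcases eq_or_ne k i with rfl | hne
    · rw [if_pos rfl, hU.2 k k rfl, if_pos rfl, one_mul]
    · rw [if_neg hne]
      rcases eq_or_ne (U i k) 0 with h | h
      · rw [h, zero_mul]
      · have hbik : b i ≤ b k := hU.1 _ _ h
        rcases eq_or_ne (b i) (b k) with hbe | hbne
        · rw [hU.2 i k hbe, if_neg (Ne.symm hne), zero_mul]
        · have : V k j = 0 := by
            by_contra hc
            exact hbne (le_antisymm hbik ((hV.1 _ _ hc).trans hij.ge))
          rw [this, mul_zero]
  rw [Finset.sum_congr rfl fun k _ => this k]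
  rw [Finset.sum_ite_eq' Finset.univ i fun k => V k j]
  rw [if_pos (Finset.mem_univ _), hV.2 i j hij]

end Struct

section UnitLevel

variable {n p : ℕ} {b : Fin n → Fin p}

local notation "M" => Matrix (Fin n) (Fin n) F
local notation "G" => (Matrix (Fin n) (Fin n) F)ˣ

lemma isUnit_det_coe (x : G) : IsUnit ((x : M)).det :=
  (Matrix.isUnit_iff_isUnit_det _).mp x.isUnit

lemma mem_levi_iff {x : G} : x ∈ leviSet F n p b ↔ leviM b (x : M) := Iff.rfl

lemma mem_unip_iff {x : G} : x ∈ unipSet F n p b ↔ unipM b (x : M) := Iff.rfl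

lemma mem_borel_iff {x : G} : x ∈ borelSet F n ↔ UT (x : M) := by
  constructor
  · intro h i j hij
    exact h i j hij
  · intro h i j hij
    exact h i j hij

lemma borel_one : (1 : G) ∈ borelSet F n := by
  rw [mem_borel_iff]
  intro i j hij
  rw [Units.val_one] at hij
  rcases eq_or_ne i j with rfl | hne
  · exact le_refl _
  · exact absurd (Matrix.one_apply_ne hne) hij

lemma borel_mul {x y : G} (hx : x ∈ borelSet F n) (hy : y ∈ borelSet F n) :
    x * y ∈ borelSet F n := by
  rw [mem_borel_iff] at *
  rw [Units.val_mul]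
  exact hx.mul hy

lemma borel_inv {x : G} (hx : x ∈ borelSet F n) : x⁻¹ ∈ borelSet F n := by
  rw [mem_borel_iff] at *
  rw [Matrix.coe_units_inv]
  exact hx.inv (isUnit_det_coe x)

lemma levi_one : (1 : G) ∈ leviSet F n p b := by
  rw [mem_levi_iff, Units.val_one]
  exact leviM.one

lemma levi_mul {x y : G} (hx : x ∈ leviSet F n p b) (hy : y ∈ leviSet F n p b) :
    x * y ∈ leviSet F n p b := by
  rw [mem_levi_iff] at *
  rw [Units.val_mul]
  exact hx.mul hy

lemma levi_inv {x : G} (hx : x ∈ leviSet F n p b) : x⁻¹ ∈ leviSet F n p b := by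
  rw [mem_levi_iff] at *
  rw [Matrix.coe_units_inv]
  exact hx.inv (isUnit_det_coe x)

lemma unip_one : (1 : G) ∈ unipSet F n p b := by
  rw [mem_unip_iff, Units.val_one]
  exact unipM.one

lemma unip_mul {x y : G} (hx : x ∈ unipSet F n p b) (hy : y ∈ unipSet F n p b) :
    x * y ∈ unipSet F n p b := by
  rw [mem_unip_iff] at *
  rw [Units.val_mul]
  exact hx.mul hy

lemma unip_inv {x : G} (hx : x ∈ unipSet F n p b) : x⁻¹ ∈ unipSet F n p b := by
  rw [mem_unip_iff] at *
  rw [Matrix.coe_units_inv]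
  refine ⟨hx.1.inv (isUnit_det_coe x), ?_⟩
  intro i j hij
  have hPinv : PM b ((x : M))⁻¹ := hx.1.inv (isUnit_det_coe x)
  have hone : ((x : M))⁻¹ * (x : M) = 1 := Matrix.nonsing_inv_mul _ (isUnit_det_coe x)
  have hsum : (((x : M))⁻¹ * (x : M)) i j = if i = j then 1 else 0 := by
    rw [hone, Matrix.one_apply]
  rw [Matrix.mul_apply] at hsum
  have hterm : ∀ k, ((x : M))⁻¹ i k * (x : M) k j =
      if k = j then ((x : M))⁻¹ i k else 0 := by
    intro k
    rcases eq_or_ne k j with rfl | hne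
    · rw [if_pos rfl, hx.2 k k rfl, if_pos rfl, mul_one]
    · rw [if_neg hne]
      rcases eq_or_ne (((x : M))⁻¹ i k) 0 with h | h
      · rw [h, zero_mul]
      · rcases eq_or_ne ((x : M) k j) 0 with h2 | h2
        · rw [h2, mul_zero]
        · have : b k = b j := le_antisymm (hx.1 _ _ h2) (hij ▸ hPinv _ _ h)
          rw [hx.2 k j this, if_neg hne, mul_zero]
  rw [Finset.sum_congr rfl fun k _ => hterm k] at hsum
  rw [Finset.sum_ite_eq' Finset.univ j (fun k => ((x : M))⁻¹ i k), if_pos (Finset.mem_univ _)]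
    at hsum
  exact hsum

lemma unip_conj {x u : G} (hx : x ∈ leviSet F n p b) (hu : u ∈ unipSet F n p b) :
    x⁻¹ * u * x ∈ unipSet F n p b := by
  have hxi : x⁻¹ ∈ leviSet F n p b := levi_inv hx
  rw [mem_unip_iff]
  have hval : ((x⁻¹ * u * x : G) : M) = ((x⁻¹ : G) : M) * (((u : M)) * ((x : M))) := by
    rw [Units.val_mul, Units.val_mul, Matrix.mul_assoc]
  constructor
  · intro i j hij
    rw [hval] at hij
    obtain ⟨k, h1, h2⟩ := exists_ne_zero_of_mul hij
    obtain ⟨m, h3, h4⟩ := exists_ne_zero_of_mul h2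
    rw [mem_levi_iff] at hxi hx
    exact le_of_le_of_eq (le_of_eq_of_le (hxi _ _ h1) ((mem_unip_iff.mp hu).1 _ _ h3))
      (hx _ _ h4)
  · intro i j hij
    rw [hval, Matrix.mul_apply]
    have hterm : ∀ k, ((x⁻¹ : G) : M) i k * ((u : M) * (x : M)) k j =
        ((x⁻¹ : G) : M) i k * (x : M) k j := by
      intro k
      rcases eq_or_ne (((x⁻¹ : G) : M) i k) 0 with h | h
      · rw [h, zero_mul, zero_mul]
      · have hbik : b i = b k := (mem_levi_iff.mp hxi) _ _ h
        rw [unip_mul_levi_entry (mem_levi_iff.mp hx) (mem_unip_iff.mp hu)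
          ((hbik.symm.trans hij : b k = b j))]
    rw [Finset.sum_congr rfl fun k _ => hterm k]
    have : ∑ k, ((x⁻¹ : G) : M) i k * (x : M) k j = (((x⁻¹ : G) : M) * (x : M)) i j := by
      rw [Matrix.mul_apply]
    rw [this, ← Units.val_mul, inv_mul_cancel, Units.val_one, Matrix.one_apply]

lemma borel_PM (hb : Monotone b) {x : G} (hx : x ∈ borelSet F n) : PM b (x : M) := by
  intro i j hij
  exact hb (mem_borel_iff.mp hx i j hij)

lemma levi_PM {x : G} (hx : x ∈ leviSet F n p b) : PM b (x : M) :=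
  fun i j hij => ((mem_levi_iff.mp hx) i j hij).le

lemma unip_subset_borel (hb : Monotone b) {u : G} (hu : u ∈ unipSet F n p b) :
    u ∈ borelSet F n := by
  rw [mem_borel_iff]
  intro i j hij
  by_contra hc
  have hji : j < i := not_le.mp hc
  have h1 : b j ≤ b i := hb hji.le
  have h2 : b i ≤ b j := (mem_unip_iff.mp hu).1 _ _ hij
  have h3 : b i = b j := le_antisymm h2 h1
  rw [(mem_unip_iff.mp hu).2 i j h3, if_neg (Fin.ne_of_gt hji)] at hij
  exact hij rfl

/-- decomposition of a block-triangular unit as (unipotent) * (Levi) -/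
lemma exists_unip_mul_levi {x : G} (hx : PM b (x : M)) :
    ∃ u l : G, u ∈ unipSet F n p b ∧ l ∈ leviSet F n p b ∧ x = u * l ∧
      (UT (x : M) → UT (l : M)) := by
  classical
  set X : M := (x : M) with hXdef
  set D : M := Matrix.of fun i j => if b i = b j then X i j else 0 with hDdef
  have hDapply : ∀ i j, D i j = if b i = b j then X i j else 0 := fun i j => rfl
  have hDlevi : leviM b D := by
    intro i j hij
    rw [hDapply] at hij
    by_contra hc
    rw [if_neg hc] at hij
    exact hij rfl
  have hsq : ∀ a, X.toSquareBlock b a = D.toSquareBlock b a := by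
    intro a
    ext i j
    have : b (i : Fin n) = b (j : Fin n) := by rw [i.2, j.2]
    simp [Matrix.toSquareBlock_def, hDapply, this]
  have hXbt : BlockTriangular X b := hx.blockTriangular
  have hDbt : BlockTriangular D b := PM.blockTriangular (fun i j hij => (hDlevi i j hij).le)
  have hdet : D.det = X.det := by
    rw [hXbt.det, hDbt.det]
    exact Finset.prod_congr rfl fun a _ => by rw [hsq a]
  have hDunit : IsUnit D := (Matrix.isUnit_iff_isUnit_det D).mpr
    (by rw [hdet]; exact isUnit_det_coe x)
  obtain ⟨l, hlval⟩ := hDunit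
  have hlmem : l ∈ leviSet F n p b := by
    rw [mem_levi_iff, hlval]; exact hDlevi
  have hlinvlevi : leviM b ((l⁻¹ : G) : M) := mem_levi_iff.mp (levi_inv hlmem)
  refine ⟨x * l⁻¹, l, ?_, hlmem, (inv_mul_cancel_right x l).symm, fun hUT => ?_⟩
  · rw [mem_unip_iff, Units.val_mul]
    refine ⟨hx.mul (levi_PM (levi_inv hlmem)), ?_⟩
    intro i j hij
    rw [Matrix.mul_apply]
    have hterm : ∀ k, X i k * ((l⁻¹ : G) : M) k j = D i k * ((l⁻¹ : G) : M) k j := by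
      intro k
      rcases eq_or_ne (((l⁻¹ : G) : M) k j) 0 with h | h
      · rw [h, mul_zero, mul_zero]
      · have hbkj : b k = b j := hlinvlevi _ _ h
        rw [hDapply, if_pos (hij.trans hbkj.symm)]
    rw [Finset.sum_congr rfl fun k _ => hterm k]
    have : ∑ k, D i k * ((l⁻¹ : G) : M) k j = (D * ((l⁻¹ : G) : M)) i j := by
      rw [Matrix.mul_apply]
    rw [this, ← hlval, ← Units.val_mul, mul_inv_cancel, Units.val_one, Matrix.one_apply]
  · intro i j hij
    rw [hlval, hDapply] at hij
    by_cases hbij : b i = b j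
    · rw [if_pos hbij] at hij
      exact hUT i j hij
    · rw [if_neg hbij] at hij
      exact absurd rfl hij

end UnitLevel

/-! ### combinatorics of coset representatives -/

section Combi

variable {n p : ℕ}

/-- increasing on each fiber of `b` -/
def Rcond (b : Fin n → Fin p) (ρ : Equiv.Perm (Fin n)) : Prop :=
  ∀ i j, b i = b j → i < j → ρ i < ρ j

/-- fiber-preserving -/
def Wfix (b : Fin n → Fin p) (w : Equiv.Perm (Fin n)) : Prop := ∀ i, b (w i) = b i

variable {b : Fin n → Fin p}

lemma Rcond.le_reflect {ρ : Equiv.Perm (Fin n)} (hρ : Rcond b ρ) {i j : Fin n}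
    (hij : b i = b j) (h : ρ i ≤ ρ j) : i ≤ j := by
  by_contra hc
  exact absurd (hρ j i hij.symm (not_le.mp hc)) (not_lt.mpr h)

lemma Rcond.le_of_le {ρ : Equiv.Perm (Fin n)} (hρ : Rcond b ρ) {i j : Fin n}
    (hij : b i = b j) (h : i ≤ j) : ρ i ≤ ρ j := by
  rcases eq_or_lt_of_le h with rfl | h
  · exact le_refl _
  · exact (hρ i j hij h).le

lemma Wfix.mul {w w' : Equiv.Perm (Fin n)} (hw : Wfix b w) (hw' : Wfix b w') :
    Wfix b (w * w') := fun i => by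
  rw [Equiv.Perm.mul_apply, hw, hw']

lemma Wfix.inv {w : Equiv.Perm (Fin n)} (hw : Wfix b w) : Wfix b w⁻¹ := fun i => by
  have := hw (w⁻¹ i)
  rw [Equiv.Perm.inv_def, Equiv.apply_symm_apply] at this
  exact this.symm

/-- two strictly monotone maps on a finset with the same image agree -/
lemma strictMonoOn_eq_of_image_eq :
    ∀ (k : ℕ) (s : Finset (Fin n)) (_ : s.card = k) (f g : Fin n → Fin n)
      (_ : ∀ i ∈ s, ∀ j ∈ s, i < j → f i < f j)
      (_ : ∀ i ∈ s, ∀ j ∈ s, i < j → g i < g j)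
      (_ : s.image f = s.image g) (i : Fin n) (_ : i ∈ s), f i = g i := by
  intro k
  induction k with
  | zero =>
      intro s hs f g _ _ _ i hi
      rw [Finset.card_eq_zero] at hs
      rw [hs] at hi
      exact absurd hi (Finset.notMem_empty _)
  | succ k ih =>
      intro s hs f g hf hg himg i hi
      have hne : s.Nonempty := ⟨i, hi⟩
      set m := s.min' hne with hm
      have hmem : m ∈ s := s.min'_mem hne
      -- the min is mapped to the min of the image
      have hfm : ∀ (h : Fin n → Fin n), (∀ a ∈ s, ∀ c ∈ s, a < c → h a < h c) →
          h m = (s.image h).min' (hne.image h) := by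
        intro h hmono
        refine le_antisymm (Finset.le_min' _ _ _ ?_) (Finset.min'_le _ _
          (Finset.mem_image_of_mem h hmem))
        intro y hy
        obtain ⟨x, hx, rfl⟩ := Finset.mem_image.mp hy
        rcases eq_or_lt_of_le (s.min'_le x hx) with h1 | h1
        · rw [← h1]
        · exact (hmono m hmem x hx h1).le
      have hfg_min : f m = g m := by
        rw [hfm f hf, hfm g hg]
        congr 1
      rcases eq_or_ne i m with rfl | hne2
      · exact hfg_min
      -- recurse on s.erase m
      have hinj : ∀ (h : Fin n → Fin n), (∀ a ∈ s, ∀ c ∈ s, a < c → h a < h c) →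
          ∀ a ∈ s, ∀ c ∈ s, h a = h c → a = c := by
        intro h hmono a ha c hc hac
        rcases lt_trichotomy a c with h1 | h1 | h1
        · exact absurd hac (hmono a ha c hc h1).ne
        · exact h1
        · exact absurd hac.symm (hmono c hc a ha h1).ne
      have himg' : (s.erase m).image f = (s.erase m).image g := by
        have key : ∀ (h : Fin n → Fin n), (∀ a ∈ s, ∀ c ∈ s, a < c → h a < h c) →
            (s.erase m).image h = (s.image h).erase (h m) := by
          intro h hmono
          ext y
          simp only [Finset.mem_image, Finset.mem_erase]
          constructor
          · rintro ⟨x, ⟨hxm, hxs⟩, rfl⟩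
            exact ⟨fun hc => hxm (hinj h hmono x hxs m hmem hc), ⟨x, hxs, rfl⟩⟩
          · rintro ⟨hym, x, hxs, rfl⟩
            exact ⟨x, ⟨fun hc => hym (by rw [hc]), hxs⟩, rfl⟩
        rw [key f hf, key g hg, himg, hfg_min]
      refine ih (s.erase m) ?_ f g ?_ ?_ himg' i (Finset.mem_erase.mpr ⟨hne2, hi⟩)
      · rw [Finset.card_erase_of_mem hmem, hs]
        omega
      · intro a ha c hc
        exact hf a (Finset.mem_of_mem_erase ha) c (Finset.mem_of_mem_erase hc)
      · intro a ha c hc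
        exact hg a (Finset.mem_of_mem_erase ha) c (Finset.mem_of_mem_erase hc)

/-- decomposition uniqueness -/
lemma rcond_wfix_unique {ρ ρ' w w' : Equiv.Perm (Fin n)} (hρ : Rcond b ρ) (hρ' : Rcond b ρ')
    (hw : Wfix b w) (hw' : Wfix b w') (heq : ρ * w = ρ' * w') : ρ = ρ' ∧ w = w' := by
  classical
  have hv : ρ' = ρ * (w * w'⁻¹) := by
    rw [← mul_assoc, heq, mul_assoc, mul_inv_cancel, mul_one]
  set v := w * w'⁻¹ with hvdef
  have hvW : Wfix b v := hw.mul hw'.inv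
  have hv1 : v = 1 := by
    apply Equiv.ext
    intro i
    simp only [Equiv.Perm.one_apply]
    set s : Finset (Fin n) := Finset.univ.filter (fun x => b x = b i) with hsdef
    have hvs : s.image v = s := by
      apply Finset.eq_of_subset_of_card_le
      · intro y hy
        obtain ⟨x, hx, rfl⟩ := Finset.mem_image.mp hy
        simp only [hsdef, Finset.mem_filter, Finset.mem_univ, true_and] at hx ⊢
        rw [hvW x, hx]
      · rw [Finset.card_image_of_injective _ v.injective]
    have himg : s.image (fun x => ρ (v x)) = s.image ρ := by
      rw [show (fun x => ρ (v x)) = ρ ∘ v from rfl, ← Finset.image_image, hvs]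
    have hmono1 : ∀ a ∈ s, ∀ c ∈ s, a < c → ρ (v a) < ρ (v c) := by
      intro a ha c hc hac
      simp only [hsdef, Finset.mem_filter, Finset.mem_univ, true_and] at ha hc
      have : b a = b c := ha.trans hc.symm
      have h2 : Rcond b (ρ * v) := by rw [← hv]; exact hρ'
      exact h2 a c this hac
    have hmono2 : ∀ a ∈ s, ∀ c ∈ s, a < c → ρ a < ρ c := by
      intro a ha c hc hac
      simp only [hsdef, Finset.mem_filter, Finset.mem_univ, true_and] at ha hc
      exact hρ a c (ha.trans hc.symm) hac
    have his : i ∈ s := by simp [hsdef]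
    have := strictMonoOn_eq_of_image_eq s.card s rfl (fun x => ρ (v x)) ρ hmono1 hmono2
      himg i his
    exact ρ.injective this
  constructor
  · rw [hv, hv1, mul_one]
  · have : ρ * w = ρ * w' := by rw [heq, hv, hv1, mul_one]
    exact mul_left_cancel this

/-- decomposition existence -/
lemma rcond_wfix_exists (σ : Equiv.Perm (Fin n)) :
    ∃ ρ w : Equiv.Perm (Fin n), Rcond b ρ ∧ Wfix b w ∧ σ = ρ * w := by
  classical
  set s : Fin p → Finset (Fin n) := fun t => Finset.univ.filter (fun x => b x = t) with hsdef
  set imgs : Fin p → Finset (Fin n) := fun t => (s t).image σ with himgsdef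
  have hcard : ∀ t, (imgs t).card = (s t).card := fun t =>
    Finset.card_image_of_injective _ σ.injective
  set iso1 : ∀ t, Fin ((s t).card) ≃o {x // x ∈ s t} := fun t => (s t).orderIsoOfFin rfl
    with hiso1
  set iso2 : ∀ t, Fin ((s t).card) ≃o {x // x ∈ imgs t} := fun t =>
    (imgs t).orderIsoOfFin (hcard t) with hiso2
  have hmem : ∀ i : Fin n, i ∈ s (b i) := fun i => by simp [hsdef]
  set f : Fin n → Fin n := fun i => ((iso2 (b i)) ((iso1 (b i)).symm ⟨i, hmem i⟩) : Fin n)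
    with hfdef
  have hfmem : ∀ i, f i ∈ imgs (b i) := fun i => ((iso2 (b i)) _).2
  have hbval : ∀ t (y : Fin n), y ∈ imgs t → ∃ u, b u = t ∧ σ u = y := by
    intro t y hy
    obtain ⟨u, hu, rfl⟩ := Finset.mem_image.mp hy
    simp only [hsdef, Finset.mem_filter, Finset.mem_univ, true_and] at hu
    exact ⟨u, hu, rfl⟩
  have hfb : ∀ i, ∃ u, b u = b i ∧ σ u = f i := fun i => hbval _ _ (hfmem i)
  have hcast : ∀ {t t' : Fin p} (_ : t = t') (x : Fin n) (hx : x ∈ s t) (hx' : x ∈ s t'),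
      ((iso2 t) ((iso1 t).symm ⟨x, hx⟩) : Fin n) = ((iso2 t') ((iso1 t').symm ⟨x, hx'⟩) : Fin n) := by
    intro t t' h x hx hx'
    subst h
    rfl
  have hinj : Function.Injective f := by
    intro i j hij
    obtain ⟨u, hu, hsu⟩ := hfb i
    obtain ⟨u', hu', hsu'⟩ := hfb j
    have huu : u = u' := σ.injective (by rw [hsu, hsu', hij])
    have hbij : b i = b j := by rw [← hu, huu, hu']
    have hj' : j ∈ s (b i) := Finset.mem_filter.mpr ⟨Finset.mem_univ _, hbij.symm⟩
    have hfj : f j = ((iso2 (b i)) ((iso1 (b i)).symm ⟨j, hj'⟩) : Fin n) :=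
      hcast hbij.symm j (hmem j) hj'
    rw [hfdef] at hij
    simp only at hij
    rw [show ((iso2 (b j)) ((iso1 (b j)).symm ⟨j, hmem j⟩) : Fin n) =
      ((iso2 (b i)) ((iso1 (b i)).symm ⟨j, hj'⟩) : Fin n) from hcast hbij.symm j (hmem j) hj']
      at hij
    have h2 := (iso1 (b i)).symm.injective ((iso2 (b i)).injective (Subtype.coe_injective hij))
    exact congrArg Subtype.val h2
  have hbijf : Function.Bijective f := Finite.injective_iff_bijective.mp hinj
  set ρ : Equiv.Perm (Fin n) := Equiv.ofBijective f hbijf with hρdef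
  have hρ_apply : ∀ i, ρ i = f i := fun i => rfl
  have hρR : Rcond b ρ := by
    intro i j hbij2 hij
    rw [hρ_apply, hρ_apply]
    have hj' : j ∈ s (b i) := Finset.mem_filter.mpr ⟨Finset.mem_univ _, hbij2.symm⟩
    rw [hfdef]
    simp only
    rw [show ((iso2 (b j)) ((iso1 (b j)).symm ⟨j, hmem j⟩) : Fin n) =
      ((iso2 (b i)) ((iso1 (b i)).symm ⟨j, hj'⟩) : Fin n) from hcast hbij2.symm j (hmem j) hj']
    rw [Subtype.coe_lt_coe, OrderIso.lt_iff_lt, OrderIso.lt_iff_lt (iso1 (b i)).symm,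
      Subtype.mk_lt_mk]
    exact hij
  refine ⟨ρ, ρ⁻¹ * σ, hρR, ?_, (mul_inv_cancel_left ρ σ).symm⟩
  intro i
  simp only [Equiv.Perm.mul_apply]
  set x := ρ⁻¹ (σ i) with hxdef
  have hρx : ρ x = σ i := by rw [hxdef, Equiv.Perm.inv_def, Equiv.apply_symm_apply]
  obtain ⟨u, hu, hsu⟩ := hfb x
  have : σ u = σ i := by rw [hsu, ← hρ_apply, hρx]
  have hui : u = i := σ.injective this
  rw [← hui, ← hu]

end Combi

section Count

variable {n p : ℕ} {b : Fin n → Fin p}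

lemma glue_cast (f : ∀ t : Fin p, {i : Fin n // b i = t} → Fin n) {t t' : Fin p} (h : t = t')
    (y : Fin n) (hy : b y = t) (hy' : b y = t') : f t ⟨y, hy⟩ = f t' ⟨y, hy'⟩ := by
  subst h
  rfl

/-- glue a family of permutations of the fibers into a permutation -/
def gluePerm (fam : ∀ t : Fin p, Equiv.Perm {i : Fin n // b i = t}) : Equiv.Perm (Fin n) where
  toFun i := ↑(fam (b i) ⟨i, rfl⟩)
  invFun i := ↑((fam (b i)).symm ⟨i, rfl⟩)
  left_inv i := by
    have hu : b (↑(fam (b i) ⟨i, rfl⟩)) = b i := (fam (b i) ⟨i, rfl⟩).2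
    dsimp only
    rw [glue_cast (fun t z => ((fam t).symm z : Fin n)) hu _ rfl hu]
    simp
  right_inv i := by
    have hu : b (↑((fam (b i)).symm ⟨i, rfl⟩)) = b i := ((fam (b i)).symm ⟨i, rfl⟩).2
    dsimp only
    rw [glue_cast (fun t z => ((fam t) z : Fin n)) hu _ rfl hu]
    simp

lemma gluePerm_wfix (fam : ∀ t : Fin p, Equiv.Perm {i : Fin n // b i = t}) :
    Wfix b (gluePerm fam) := fun i => (fam (b i) ⟨i, rfl⟩).2

/-- fiber-preserving permutations are families of permutations of the fibers -/
def wfixEquiv : {w : Equiv.Perm (Fin n) // Wfix b w} ≃ ∀ t : Fin p,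
    Equiv.Perm {i : Fin n // b i = t} where
  toFun w t := Equiv.Perm.subtypePerm w.1 (fun x => by
    constructor
    · intro hx; rw [← w.2 x]; exact hx
    · intro hx; rw [w.2 x]; exact hx)
  invFun fam := ⟨gluePerm fam, gluePerm_wfix fam⟩
  left_inv w := by
    apply Subtype.ext
    apply Equiv.ext
    intro i
    rfl
  right_inv fam := by
    funext t
    apply Equiv.ext
    rintro ⟨i, hi⟩
    apply Subtype.ext
    show (gluePerm fam) i = ↑(fam t ⟨i, hi⟩)
    show ↑(fam (b i) ⟨i, rfl⟩) = (↑(fam t ⟨i, hi⟩) : Fin n)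
    exact glue_cast (fun t z => ((fam t) z : Fin n)) hi _ rfl hi

lemma card_wfix (α : Fin p → ℕ)
    (hcard : ∀ j : Fin p, (Finset.univ.filter fun i => b i = j).card = α j) :
    Nat.card {w : Equiv.Perm (Fin n) // Wfix b w} = ∏ j, Nat.factorial (α j) := by
  classical
  rw [Nat.card_congr (wfixEquiv (b := b)), Nat.card_pi]
  refine Finset.prod_congr rfl fun t _ => ?_
  rw [Nat.card_eq_fintype_card, Fintype.card_perm, Fintype.card_subtype, hcard t]

lemma card_rcond_mul (α : Fin p → ℕ)
    (hcard : ∀ j : Fin p, (Finset.univ.filter fun i => b i = j).card = α j) :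
    Nat.card {ρ : Equiv.Perm (Fin n) // Rcond b ρ} * ∏ j, Nat.factorial (α j) =
      Nat.factorial n := by
  classical
  have e : {ρ : Equiv.Perm (Fin n) // Rcond b ρ} × {w : Equiv.Perm (Fin n) // Wfix b w} ≃
      Equiv.Perm (Fin n) := by
    refine Equiv.ofBijective (fun z => z.1.1 * z.2.1) ⟨?_, ?_⟩
    · rintro ⟨⟨ρ, hρ⟩, ⟨w, hw⟩⟩ ⟨⟨ρ', hρ'⟩, ⟨w', hw'⟩⟩ heq
      obtain ⟨h1, h2⟩ := rcond_wfix_unique hρ hρ' hw hw' heq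
      simp only [Prod.mk.injEq, Subtype.mk.injEq]
      exact ⟨h1, h2⟩
    · intro σ
      obtain ⟨ρ, w, hρ, hw, hσ⟩ := rcond_wfix_exists (b := b) σ
      exact ⟨⟨⟨ρ, hρ⟩, ⟨w, hw⟩⟩, hσ.symm⟩
  have h1 : Nat.card (Equiv.Perm (Fin n)) = Nat.factorial n := by
    rw [Nat.card_eq_fintype_card, Fintype.card_perm, Fintype.card_fin]
  rw [← card_wfix α hcard, ← Nat.card_prod, Nat.card_congr e, h1]

end Count

section Main

variable {n p : ℕ} {b : Fin n → Fin p}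

local notation "M" => Matrix (Fin n) (Fin n) F
local notation "G" => (Matrix (Fin n) (Fin n) F)ˣ

/-- permutation matrix as a unit -/
def Pu (σ : Equiv.Perm (Fin n)) : (Matrix (Fin n) (Fin n) F)ˣ where
  val := σ.permMatrix F
  inv := σ⁻¹.permMatrix F
  val_inv := by rw [permMatrix_mul_permMatrix, inv_mul_cancel, _root_.permMatrix_one]
  inv_val := by rw [permMatrix_mul_permMatrix, mul_inv_cancel, _root_.permMatrix_one]

lemma Pu_val (σ : Equiv.Perm (Fin n)) : ((Pu σ : G) : M) = σ.permMatrix F := rfl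

lemma Pu_mul (σ τ : Equiv.Perm (Fin n)) : (Pu σ : G) * Pu τ = Pu (τ * σ) :=
  Units.ext (permMatrix_mul_permMatrix σ τ)

lemma Pu_inv (σ : Equiv.Perm (Fin n)) : (Pu σ : G)⁻¹ = Pu σ⁻¹ := rfl

lemma Pu_levi {w : Equiv.Perm (Fin n)} (hw : Wfix b w) : (Pu w : G) ∈ leviSet F n p b := by
  rw [mem_levi_iff]
  intro i j hij
  rw [Pu_val, permMatrix_apply] at hij
  by_cases h : w i = j
  · rw [← h, hw i]
  · rw [if_neg h] at hij
    exact absurd rfl hij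

/-- entries of the conjugate `(Pu ρ)⁻¹ c (Pu ρ)` -/
lemma conj_entry_inv (ρ : Equiv.Perm (Fin n)) (c : G) (i j : Fin n) :
    (((Pu ρ : G)⁻¹ * c * Pu ρ : G) : M) i j = (c : M) (ρ⁻¹ i) (ρ⁻¹ j) := by
  rw [Units.val_mul, Units.val_mul, Pu_inv, Pu_val, Pu_val, Matrix.mul_assoc,
    _root_.permMatrix_mul, mul_permMatrix]
  rfl

/-- entries of the conjugate `(Pu ρ) c (Pu ρ)⁻¹` -/
lemma conj_entry (ρ : Equiv.Perm (Fin n)) (c : G) (i j : Fin n) :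
    (((Pu ρ : G) * c * (Pu ρ : G)⁻¹ : G) : M) i j = (c : M) (ρ i) (ρ j) := by
  rw [Units.val_mul, Units.val_mul, Pu_inv, Pu_val, Pu_val, Matrix.mul_assoc,
    _root_.permMatrix_mul, mul_permMatrix]
  have : (ρ⁻¹ : Equiv.Perm (Fin n)).symm j = ρ j := rfl
  rw [this]

/-- conjugation by `Pu ρ` for `ρ ∈ R` sends `L ∩ B` into `B` -/
lemma rcond_conj {ρ : Equiv.Perm (Fin n)} (hρ : Rcond b ρ) {c : G}
    (hc : c ∈ leviSet F n p b ∩ borelSet F n) :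
    (Pu ρ : G)⁻¹ * c * Pu ρ ∈ borelSet F n := by
  rw [mem_borel_iff]
  intro i j hij
  rw [conj_entry_inv] at hij
  have h1 : b (ρ⁻¹ i) = b (ρ⁻¹ j) := (mem_levi_iff.mp hc.1) _ _ hij
  have h2 : ρ⁻¹ i ≤ ρ⁻¹ j := (mem_borel_iff.mp hc.2) _ _ hij
  have := hρ.le_of_le h1 h2
  rwa [Equiv.Perm.inv_def, Equiv.apply_symm_apply, Equiv.apply_symm_apply] at this

/-- Bruhat decomposition at the level of units -/
lemma bruhat_units (x : G) : ∃ (σ : Equiv.Perm (Fin n)) (t₁ t₂ : G),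
    t₁ ∈ borelSet F n ∧ t₂ ∈ borelSet F n ∧ x = t₁ * Pu σ * t₂ := by
  obtain ⟨σ, T₁, T₂, h1, h2, d1, d2, heq⟩ := bruhat_exists n (x : M) (isUnit_det_coe x)
  obtain ⟨t₁, ht₁⟩ := (Matrix.isUnit_iff_isUnit_det T₁).mpr d1
  obtain ⟨t₂, ht₂⟩ := (Matrix.isUnit_iff_isUnit_det T₂).mpr d2
  refine ⟨σ, t₁, t₂, ?_, ?_, ?_⟩
  · rw [mem_borel_iff, ht₁]; exact fun i j h => h1 i j h
  · rw [mem_borel_iff, ht₂]; exact fun i j h => h2 i j h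
  · apply Units.ext
    rw [Units.val_mul, Units.val_mul, ht₁, ht₂, Pu_val]
    exact heq

/-- Bruhat uniqueness at the level of units -/
lemma bruhat_units_unique {σ τ : Equiv.Perm (Fin n)} {t₁ t₂ s₁ s₂ : G}
    (h1 : t₁ ∈ borelSet F n) (h2 : t₂ ∈ borelSet F n) (h3 : s₁ ∈ borelSet F n)
    (h4 : s₂ ∈ borelSet F n) (heq : t₁ * Pu σ * t₂ = s₁ * Pu τ * s₂) : σ = τ := by
  have key : (s₁⁻¹ * t₁ : G) * Pu σ * (t₂ * s₂⁻¹) = Pu τ := by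
    rw [show (s₁⁻¹ * t₁ : G) * Pu σ * (t₂ * s₂⁻¹) = s₁⁻¹ * (t₁ * Pu σ * t₂) * s₂⁻¹ by group,
      heq]
    group
  have hval := congrArg (Units.val) key
  rw [Units.val_mul, Units.val_mul, Pu_val, Pu_val] at hval
  refine bruhat_unique σ τ _ _ ?_ ?_ (isUnit_det_coe _) (isUnit_det_coe _) hval
  · exact fun i j h => mem_borel_iff.mp (borel_mul (borel_inv h3) h1) i j h
  · exact fun i j h => mem_borel_iff.mp (borel_mul h2 (borel_inv h4)) i j h

/-- Bruhat decomposition inside the Levi -/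
lemma levi_bruhat (hb : Monotone b) {l : G} (hl : l ∈ leviSet F n p b) :
    ∃ (w : Equiv.Perm (Fin n)) (l₁ l₂ : G), Wfix b w ∧
      l₁ ∈ leviSet F n p b ∩ borelSet F n ∧ l₂ ∈ leviSet F n p b ∩ borelSet F n ∧
      l = l₁ * Pu w * l₂ := by
  obtain ⟨w, t₁, t₂, hb₁, hb₂, heq⟩ := bruhat_units l
  have hPw : PM b ((Pu w : G) : M) := by
    have h : (Pu w : G) = t₁⁻¹ * l * t₂⁻¹ := by rw [heq]; group
    rw [h, Units.val_mul, Units.val_mul]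
    exact (((borel_PM hb (borel_inv hb₁)).mul (levi_PM hl)).mul (borel_PM hb (borel_inv hb₂)))
  have hwge : ∀ i, b i ≤ b (w i) := by
    intro i
    apply hPw i (w i)
    rw [Pu_val, permMatrix_apply, if_pos rfl]
    exact one_ne_zero
  have hwfix : Wfix b w := by
    have hsum : ∑ i, ((b (w i)) : ℕ) = ∑ i, ((b i) : ℕ) :=
      Equiv.sum_comp w (fun i => ((b i) : ℕ))
    have := (Finset.sum_eq_sum_iff_of_le (fun i _ => Nat.le_of_lt_succ
      (Nat.lt_succ_of_le (hwge i)))).mp hsum.symm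
    intro i
    exact Fin.val_injective ((this i (Finset.mem_univ i))).symm
  obtain ⟨u₁, l₁, hu₁, hl₁, ht₁eq, hUT₁⟩ := exists_unip_mul_levi (borel_PM hb hb₁)
  obtain ⟨u₂, l₂, hu₂, hl₂, ht₂eq, hUT₂⟩ := exists_unip_mul_levi (borel_PM hb hb₂)
  have hl₁b : l₁ ∈ borelSet F n := mem_borel_iff.mpr (hUT₁ (mem_borel_iff.mp hb₁))
  have hl₂b : l₂ ∈ borelSet F n := mem_borel_iff.mpr (hUT₂ (mem_borel_iff.mp hb₂))
  have hPwlevi : (Pu w : G) ∈ leviSet F n p b := Pu_levi hwfix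
  have hPwinvlevi : ((Pu w : G))⁻¹ ∈ leviSet F n p b := levi_inv hPwlevi
  -- u₂' = Pw u₂ Pw⁻¹ ∈ N
  have hu₂' : (Pu w : G) * u₂ * (Pu w : G)⁻¹ ∈ unipSet F n p b := by
    have := unip_conj hPwinvlevi hu₂
    rwa [inv_inv] at this
  -- u₃ = l₁ (Pw u₂ Pw⁻¹) l₁⁻¹ ∈ N
  have hu₃ : l₁ * ((Pu w : G) * u₂ * (Pu w : G)⁻¹) * l₁⁻¹ ∈ unipSet F n p b := by
    have := unip_conj (levi_inv hl₁) hu₂'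
    rwa [inv_inv] at this
  set m : G := l₁ * Pu w * l₂ with hmdef
  have hmlevi : m ∈ leviSet F n p b := levi_mul (levi_mul hl₁ hPwlevi) hl₂
  set uu : G := u₁ * (l₁ * ((Pu w : G) * u₂ * (Pu w : G)⁻¹) * l₁⁻¹) with huudef
  have huu : uu ∈ unipSet F n p b := unip_mul hu₁ hu₃
  have hlm : l = uu * m := by
    rw [huudef, hmdef, heq, ht₁eq, ht₂eq]
    group
  -- conclude l = m entrywise
  have : l = m := by
    apply Units.ext
    ext i j
    by_cases hbij : b i = b j
    · have h1 : ((l : G) : M) i j = ((uu * m : G) : M) i j := by rw [← hlm]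
      rw [Units.val_mul] at h1
      rw [h1, unip_mul_levi_entry (mem_levi_iff.mp hmlevi) (mem_unip_iff.mp huu) hbij]
    · rcases eq_or_ne (((l : G) : M) i j) 0 with h0 | h0
      · rw [h0]
        rcases eq_or_ne (((m : G) : M) i j) 0 with h0' | h0'
        · rw [h0']
        · exact absurd (mem_levi_iff.mp hmlevi i j h0') hbij
      · exact absurd (mem_levi_iff.mp hl i j h0) hbij
  exact ⟨w, l₁, l₂, hwfix, ⟨hl₁, hl₁b⟩, ⟨hl₂, hl₂b⟩, this⟩

/-- an element of the parabolic times `Pu ρ` lies in the cell `B P_{ρw} B` -/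
lemma parab_mul_Pu (hb : Monotone b) {q : G} (hq : PM b (q : M)) {ρ : Equiv.Perm (Fin n)}
    (hρ : Rcond b ρ) : ∃ (w : Equiv.Perm (Fin n)) (t₁ t₂ : G), Wfix b w ∧
      t₁ ∈ borelSet F n ∧ t₂ ∈ borelSet F n ∧ q * Pu ρ = t₁ * Pu (ρ * w) * t₂ := by
  obtain ⟨u₀, l₀, hu₀, hl₀, hqeq, -⟩ := exists_unip_mul_levi hq
  obtain ⟨w, s₁, s₂, hwfix, hs₁, hs₂, hleq⟩ := levi_bruhat hb hl₀
  refine ⟨w, u₀ * s₁, ((Pu ρ : G)⁻¹ * s₂ * Pu ρ), hwfix,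
    borel_mul (unip_subset_borel hb hu₀) hs₁.2, rcond_conj hρ hs₂, ?_⟩
  rw [hqeq, hleq, ← Pu_mul]
  group
end Main

section MainLemmas

variable {n p : ℕ} {b : Fin n → Fin p} {H : Subgroup (Matrix (Fin n) (Fin n) F)ˣ}

local notation "M" => Matrix (Fin n) (Fin n) F
local notation "G" => (Matrix (Fin n) (Fin n) F)ˣ

lemma KSet_PM (hHL : (H : Set (Matrix (Fin n) (Fin n) F)ˣ) ⊆ leviSet F n p b)
    {κ : G} (hκ : κ ∈ KSet F n p b H) : PM b ((κ : G) : M) := by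
  obtain ⟨h, hh, u, hu, rfl⟩ := hκ
  rw [Units.val_mul]
  exact (levi_PM (hHL hh)).mul (mem_unip_iff.mp hu).1

lemma main_exists {N : ℕ} {g : Fin N → G} (hb : Monotone b)
    (hHL : (H : Set (Matrix (Fin n) (Fin n) F)ˣ) ⊆ leviSet F n p b)
    (hcover : ∀ x ∈ leviSet F n p b, ∃ k : Fin N, ∃ h ∈ H,
      ∃ c ∈ leviSet F n p b ∩ borelSet F n, x = h * g k * c)
    (x : G) : ∃ (k : Fin N) (ρ : Equiv.Perm (Fin n)), Rcond b ρ ∧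
      ∃ κ ∈ KSet F n p b H, ∃ β ∈ borelSet F n, x = κ * (g k * Pu ρ) * β := by
  obtain ⟨σ, t₁, t₂, hb₁, hb₂, heq⟩ := bruhat_units x
  obtain ⟨ρ, w, hρ, hw, hσ⟩ := rcond_wfix_exists (b := b) σ
  obtain ⟨u₁, l₁, hu₁, hl₁, ht₁eq, -⟩ := exists_unip_mul_levi (borel_PM hb hb₁)
  have hl' : l₁ * Pu w ∈ leviSet F n p b := levi_mul hl₁ (Pu_levi hw)
  obtain ⟨k, h, hh, c, hc, hcov⟩ := hcover _ hl'
  have hc₂ : (Pu ρ : G)⁻¹ * c * Pu ρ ∈ borelSet F n := rcond_conj hρ hc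
  have hu₂ : h⁻¹ * u₁ * h ∈ unipSet F n p b := unip_conj (hHL hh) hu₁
  refine ⟨k, ρ, hρ, h * (h⁻¹ * u₁ * h), ⟨h, hh, _, hu₂, rfl⟩,
    ((Pu ρ : G)⁻¹ * c * Pu ρ) * t₂, borel_mul hc₂ hb₂, ?_⟩
  rw [heq, ht₁eq, hσ, ← Pu_mul]
  have hcov' : l₁ * Pu w = h * g k * c := hcov
  calc u₁ * l₁ * ((Pu w : G) * Pu ρ) * t₂ = u₁ * (l₁ * Pu w) * Pu ρ * t₂ := by group
    _ = u₁ * (h * g k * c) * Pu ρ * t₂ := by rw [hcov']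
    _ = h * (h⁻¹ * u₁ * h) * (g k * Pu ρ) * ((Pu ρ : G)⁻¹ * c * Pu ρ * t₂) := by group

lemma main_unique {N : ℕ} {g : Fin N → G} (hb : Monotone b)
    (hHL : (H : Set (Matrix (Fin n) (Fin n) F)ˣ) ⊆ leviSet F n p b)
    (hgL : ∀ k, g k ∈ leviSet F n p b)
    (hdisj : ∀ k k' : Fin N, ∀ h ∈ H, ∀ h' ∈ H,
      ∀ c ∈ leviSet F n p b ∩ borelSet F n, ∀ c' ∈ leviSet F n p b ∩ borelSet F n,
      h * g k * c = h' * g k' * c' → k = k')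
    {k k' : Fin N} {ρ ρ' : Equiv.Perm (Fin n)} (hρ : Rcond b ρ) (hρ' : Rcond b ρ')
    {κ β : G} (hκ : κ ∈ KSet F n p b H) (hβ : β ∈ borelSet F n)
    (heq : κ * (g k * Pu ρ) * β = g k' * Pu ρ') : k = k' ∧ ρ = ρ' := by
  -- step 1 : ρ = ρ'
  have hq : PM b ((κ * g k : G) : M) := by
    rw [Units.val_mul]
    exact (KSet_PM hHL hκ).mul (levi_PM (hgL k))
  obtain ⟨w, t₁, t₂, hwfix, ht₁, ht₂, hcell⟩ := parab_mul_Pu hb hq hρ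
  have hq' : PM b ((g k' : G) : M) := levi_PM (hgL k')
  obtain ⟨w', t₁', t₂', hwfix', ht₁', ht₂', hcell'⟩ := parab_mul_Pu hb hq' hρ'
  have hcells : t₁ * Pu (ρ * w) * (t₂ * β) = t₁' * Pu (ρ' * w') * t₂' := by
    rw [show t₁ * Pu (ρ * w) * (t₂ * β) = (t₁ * Pu (ρ * w) * t₂) * β by group, ← hcell,
      show κ * g k * Pu ρ * β = κ * (g k * Pu ρ) * β by group, heq, hcell']
  have hww : ρ * w = ρ' * w' :=
    bruhat_units_unique ht₁ (borel_mul ht₂ hβ) ht₁' ht₂' hcells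
  obtain ⟨hρρ', -⟩ := rcond_wfix_unique hρ hρ' hwfix hwfix' hww
  subst hρρ'
  refine ⟨?_, rfl⟩
  -- step 2 : k = k'
  obtain ⟨h, hh, u, hu, rfl⟩ := hκ
  have h3 : h * u * g k = g k' * Pu ρ * β⁻¹ * (Pu ρ : G)⁻¹ := by
    rw [← heq]
    group
  set l₁ : G := (g k')⁻¹ * h * g k with hl₁def
  have hl₁levi : l₁ ∈ leviSet F n p b :=
    levi_mul (levi_mul (levi_inv (hgL k')) (hHL hh)) (hgL k)
  have hu₄ : (g k)⁻¹ * u * g k ∈ unipSet F n p b := unip_conj (hgL k) hu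
  have hm : l₁ * ((g k)⁻¹ * u * g k) = (Pu ρ : G) * β⁻¹ * (Pu ρ : G)⁻¹ := by
    rw [hl₁def, show (g k')⁻¹ * h * g k * ((g k)⁻¹ * u * g k) = (g k')⁻¹ * (h * u * g k) by
      group, h3]
    group
  have hβinv : β⁻¹ ∈ borelSet F n := borel_inv hβ
  have hl₁borel : l₁ ∈ borelSet F n := by
    rw [mem_borel_iff]
    intro i j hij
    have hbij : b i = b j := mem_levi_iff.mp hl₁levi i j hij
    have hentry : ((l₁ : G) : M) i j =
        (((Pu ρ : G) * β⁻¹ * (Pu ρ : G)⁻¹ : G) : M) i j := by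
      rw [← hm, Units.val_mul]
      exact (levi_mul_unip_entry (mem_levi_iff.mp hl₁levi) (mem_unip_iff.mp hu₄) hbij).symm
    rw [hentry, conj_entry] at hij
    have h5 : ρ i ≤ ρ j := mem_borel_iff.mp hβinv _ _ hij
    exact hρ.le_reflect hbij h5
  have hfinal : h * g k * 1 = 1 * g k' * l₁ := by
    rw [hl₁def]
    group
  exact hdisj k k' h hh 1 (one_mem H) 1 ⟨levi_one, borel_one⟩ l₁ ⟨hl₁levi, hl₁borel⟩ hfinal

end MainLemmas


variable (F)

/-- Proposition 8.6 / Corollary 8.7 of the paper: if `H ≤ L` has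
`N` double cosets `H g_k (L ∩ B)` in `L` (a disjoint cover), then `K = HN` has finitely
many double cosets with `B` in `GL_n(F)`; in fact
`|K\G/B| · α₁!···α_p! = N · n!`. -/
theorem K_double_cosets_card (p n : ℕ) (α : Fin p → ℕ) (hn : ∑ j, α j = n)
    (b : Fin n → Fin p) (hb : Monotone b)
    (hcard : ∀ j : Fin p, (Finset.univ.filter fun i => b i = j).card = α j)
    (H : Subgroup (Matrix (Fin n) (Fin n) F)ˣ)
    (hHL : (H : Set (Matrix (Fin n) (Fin n) F)ˣ) ⊆ leviSet F n p b)
    (N : ℕ) (g : Fin N → (Matrix (Fin n) (Fin n) F)ˣ)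
    (hgL : ∀ k, g k ∈ leviSet F n p b)
    (hcover : ∀ x ∈ leviSet F n p b, ∃ k : Fin N, ∃ h ∈ H,
      ∃ c ∈ leviSet F n p b ∩ borelSet F n, x = h * g k * c)
    (hdisj : ∀ k k' : Fin N, ∀ h ∈ H, ∀ h' ∈ H,
      ∀ c ∈ leviSet F n p b ∩ borelSet F n, ∀ c' ∈ leviSet F n p b ∩ borelSet F n,
      h * g k * c = h' * g k' * c' → k = k') :
    Finite (DoubleCoset.Quotient (KSet F n p b H) (borelSet F n)) ∧
      Nat.card (DoubleCoset.Quotient (KSet F n p b H) (borelSet F n)) * ∏ j, Nat.factorial (α j) =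
        N * Nat.factorial n := by

  classical
  set Bsub : Subgroup (Matrix (Fin n) (Fin n) F)ˣ :=
    { carrier := borelSet F n
      mul_mem' := fun ha hb' => borel_mul ha hb'
      one_mem' := borel_one
      inv_mem' := fun h => borel_inv h } with hBsub
  set Ksub : Subgroup (Matrix (Fin n) (Fin n) F)ˣ :=
    { carrier := KSet F n p b H
      one_mem' := ⟨1, one_mem H, 1, unip_one, (one_mul 1).symm⟩
      mul_mem' := by
        rintro a a' ⟨h, hh, u, hu, rfl⟩ ⟨h', hh', u', hu', rfl⟩
        exact ⟨h * h', mul_mem hh hh', (h'⁻¹ * u * h') * u',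
          unip_mul (unip_conj (hHL hh') hu) hu', by group⟩
      inv_mem' := by
        rintro a ⟨h, hh, u, hu, rfl⟩
        refine ⟨h⁻¹, inv_mem hh, h * u⁻¹ * h⁻¹, ?_, by group⟩
        have := unip_conj (levi_inv (hHL hh)) (unip_inv hu)
        rwa [inv_inv] at this } with hKsub
  have hKcoe : (Ksub : Set (Matrix (Fin n) (Fin n) F)ˣ) = KSet F n p b H := rfl
  have hBcoe : (Bsub : Set (Matrix (Fin n) (Fin n) F)ˣ) = borelSet F n := rfl
  -- the parametrization of the double cosets
  set T := Fin N × {ρ : Equiv.Perm (Fin n) // Rcond b ρ} with hT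
  set f : T → DoubleCoset.Quotient (KSet F n p b H) (borelSet F n) :=
    fun z => Quotient.mk'' (g z.1 * Pu z.2.1) with hf
  have hsurj : Function.Surjective f := by
    intro q
    obtain ⟨x, hxq⟩ := Quot.exists_rep q
    obtain ⟨k, ρ, hρ, κ, hκ, β, hβ, hx⟩ := main_exists hb hHL hcover x
    refine ⟨⟨k, ⟨ρ, hρ⟩⟩, ?_⟩
    rw [← hxq]
    apply Quotient.sound'
    show DoubleCoset.doubleCoset (g k * Pu ρ) (KSet F n p b H) (borelSet F n) =
      DoubleCoset.doubleCoset x (KSet F n p b H) (borelSet F n)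
    have hxmem : x ∈ DoubleCoset.doubleCoset (g k * Pu ρ) (Ksub : Set (Matrix (Fin n) (Fin n) F)ˣ)
        (Bsub : Set (Matrix (Fin n) (Fin n) F)ˣ) :=
      DoubleCoset.mem_doubleCoset.mpr ⟨κ, hκ, β, hβ, hx⟩
    exact (DoubleCoset.doubleCoset_eq_of_mem (H := Ksub) (K := Bsub) hxmem).symm
  have hinj : Function.Injective f := by
    rintro ⟨k, ⟨ρ, hρ⟩⟩ ⟨k', ⟨ρ', hρ'⟩⟩ hzz
    have hrel := Quotient.exact' hzz
    have hdos : DoubleCoset.doubleCoset (g k * Pu ρ) (KSet F n p b H) (borelSet F n) =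
        DoubleCoset.doubleCoset (g k' * Pu ρ') (KSet F n p b H) (borelSet F n) := hrel
    have hself : g k' * Pu ρ' ∈ DoubleCoset.doubleCoset (g k' * Pu ρ')
        (KSet F n p b H) (borelSet F n) :=
      DoubleCoset.mem_doubleCoset.mpr ⟨1, Ksub.one_mem, 1, Bsub.one_mem, by group⟩
    rw [← hdos] at hself
    obtain ⟨κ, hκ, β, hβ, heq⟩ := DoubleCoset.mem_doubleCoset.mp hself
    obtain ⟨hk, hρρ⟩ := main_unique hb hHL hgL hdisj hρ hρ' hκ hβ heq.symm
    simp [hk, hρρ]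
  have e : T ≃ DoubleCoset.Quotient (KSet F n p b H) (borelSet F n) :=
    Equiv.ofBijective f ⟨hinj, hsurj⟩
  haveI : Finite T := by
    rw [hT]
    infer_instance
  constructor
  · exact Finite.of_equiv T e
  · have hcardQ : Nat.card (DoubleCoset.Quotient (KSet F n p b H) (borelSet F n)) =
        N * Nat.card {ρ : Equiv.Perm (Fin n) // Rcond b ρ} := by
      rw [← Nat.card_congr e, hT, Nat.card_prod, Nat.card_eq_fintype_card, Fintype.card_fin]
    rw [hcardQ, mul_assoc, card_rcond_mul α hcard]
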